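/- arXiv:1807.04082 — 6 statements merged into one kernel-verified Lean document; each statement's English description precedes it below -/
import Mathlib

section
/- If a and b are elements of a finite ring R with identity that generate the same principal left ideal, then there exists a unit u of R such that u*a = b. -/
/-!
Write `b = r * a` and `a = s * b`, so `s * r` fixes `a`. An idempotent power `e` of `s * r` gives
`p = r * e` and `q` with `p * q * p = p`, `q * p * q = q`, `q * p * a = a` and `p * a = b`; thus
the right ideals `(q * p) R` and `(p * q) R` are isomorphic.

The crux is cancellation in a finite ring: also `(1 - q * p) R ≅ (1 - p * q) R`. For an
idempotent `g`, the `m ∈ x R` with `m * g = 0` number `|x R| / |x R g|`, the same for `g = q * p`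
and `g = p * q`. Sorting them by the principal right ideal `m R` and inducting over principal
right ideals (Möbius inversion), the number of `m` with `m * g = 0` and a prescribed `m R` agrees
too. The ideal `(1 - p * q) R` is generated by such an `m` for `g = p * q`, namely `1 - p * q`, so
it is generated by some `m` with `m * (q * p) = 0`. Then `p + m` is right invertible, hence a
unit of the finite ring, and `(p + m) * a = b`.
-/

open Finset

theorem exists_isIdempotentElem_pow_succ {M : Type*} [Monoid M] [Finite M] (x : M) :
    ∃ n : ℕ, IsIdempotentElem (x ^ (n + 1)) := by
  -- the positive powers of `x` form a compact semigroup in the discrete topology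
  let : TopologicalSpace M := ⊥
  have : DiscreteTopology M := ⟨rfl⟩
  obtain ⟨_, ⟨n, rfl⟩, hn⟩ := exists_idempotent_in_compact_subsemigroup
    (fun _ => continuous_of_discreteTopology) (Set.range fun n : ℕ => x ^ (n + 1))
    (Set.range_nonempty _) (Set.toFinite _).isCompact
    (by rintro _ ⟨i, rfl⟩ _ ⟨j, rfl⟩; exact ⟨i + j + 1, by rw [← pow_add]; ring_nf⟩)
  exact ⟨n, hn⟩

theorem pow_mul_eq_self_of_mul_eq_self {M : Type*} [Monoid M] {t a : M} (h : t * a = a)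
    (n : ℕ) : t ^ n * a = a := by
  induction n with
  | zero => rw [pow_zero, one_mul]
  | succ n ih => rw [pow_succ, mul_assoc, h, ih]

theorem exists_inverse_pair_of_mul_mul_eq_self {M : Type*} [Monoid M] [Finite M]
    {r s a : M} (h : s * r * a = a) :
    ∃ p q : M, p * q * p = p ∧ q * p * q = q ∧ q * p * a = a ∧ p * a = r * a := by
  obtain ⟨n, he⟩ := exists_isIdempotentElem_pow_succ (s * r)
  set e := (s * r) ^ (n + 1)
  have hea : e * a = a := pow_mul_eq_self_of_mul_eq_self h _
  have hqp : e * (s * r) ^ n * s * (r * e) = e := by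
    calc e * (s * r) ^ n * s * (r * e) = e * ((s * r) ^ n * (s * r)) * e := by
          simp only [mul_assoc]
      _ = e := by rw [← pow_succ, he.eq, he.eq]
  refine ⟨r * e, e * (s * r) ^ n * s, ?_, ?_, by rw [hqp, hea], by rw [mul_assoc, hea]⟩
  · rw [mul_assoc, hqp, mul_assoc, he.eq]
  · rw [hqp, ← mul_assoc, ← mul_assoc, he.eq]

theorem add_mul_add_eq_one {R : Type*} [Ring R] {p q m w : R} (hp : p * q * p = p)
    (hq : q * p * q = q) (hm : m * (q * p) = 0) (hw : m * w = 1 - p * q) :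
    (p + m) * (q + (1 - q * p) * w) = 1 := by
  have hmq : m * q = 0 := by rw [← hq, ← mul_assoc, ← mul_assoc, mul_assoc m, hm, zero_mul]
  have hp' : p * (1 - q * p) = 0 := by rw [mul_sub, mul_one, ← mul_assoc, hp, sub_self]
  have hm' : m * (1 - q * p) = m := by rw [mul_sub, mul_one, hm, sub_zero]
  calc (p + m) * (q + (1 - q * p) * w)
      = p * q + m * q + p * (1 - q * p) * w + m * (1 - q * p) * w := by noncomm_ring
    _ = 1 := by rw [hmq, hp', hm', hw, zero_mul]; abel

section FiniteRing

variable {R : Type*} [Ring R] [Fintype R] [DecidableEq R]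

def rightMultiples (c : R) : Finset R := univ.image (c * ·)

theorem mem_rightMultiples {c x : R} : x ∈ rightMultiples c ↔ ∃ y, c * y = x := by
  simp [rightMultiples]

theorem self_mem_rightMultiples (c : R) : c ∈ rightMultiples c :=
  mem_rightMultiples.2 ⟨1, mul_one c⟩

theorem mul_mem_rightMultiples {c x : R} (hx : x ∈ rightMultiples c) (y : R) :
    x * y ∈ rightMultiples c := by
  obtain ⟨z, rfl⟩ := mem_rightMultiples.1 hx
  exact mem_rightMultiples.2 ⟨z * y, (mul_assoc _ _ _).symm⟩

theorem add_mem_rightMultiples {c x y : R} (hx : x ∈ rightMultiples c)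
    (hy : y ∈ rightMultiples c) : x + y ∈ rightMultiples c := by
  obtain ⟨x', rfl⟩ := mem_rightMultiples.1 hx
  obtain ⟨y', rfl⟩ := mem_rightMultiples.1 hy
  exact mem_rightMultiples.2 ⟨x' + y', mul_add _ _ _⟩

theorem rightMultiples_subset_of_mem {c m : R} (hm : m ∈ rightMultiples c) :
    rightMultiples m ⊆ rightMultiples c := fun _ hx => by
  obtain ⟨y, rfl⟩ := mem_rightMultiples.1 hx
  exact mul_mem_rightMultiples hm y

/-- Peirce decomposition `c R = c R e ⊕ c R (1 - e)`. -/
theorem card_rightMultiples_eq_mul {e : R} (he : IsIdempotentElem e) (c : R) :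
    #(rightMultiples c) =
      #{y ∈ rightMultiples c | y * e = y} * #{y ∈ rightMultiples c | y * e = 0} := by
  rw [← card_product]
  refine card_nbij' (fun y => (y * e, y - y * e)) (fun z => z.1 + z.2) ?_ ?_ ?_ ?_
  · intro y hy
    have hy' : y - y * e = y * (1 - e) := by rw [mul_sub, mul_one]
    simp only [coe_filter, coe_product, Set.mem_prod, Set.mem_ofPred_eq, mem_coe] at hy ⊢
    refine ⟨⟨mul_mem_rightMultiples hy e, by rw [mul_assoc, he.eq]⟩,
      hy' ▸ mul_mem_rightMultiples hy _, by rw [sub_mul, mul_assoc, he.eq, sub_self]⟩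
  · rintro ⟨y, z⟩ hyz
    simp only [coe_filter, coe_product, Set.mem_prod, Set.mem_ofPred_eq] at hyz
    exact add_mem_rightMultiples hyz.1.1 hyz.2.1
  · intro y _
    simp
  · rintro ⟨y, z⟩ hyz
    simp only [coe_filter, coe_product, Set.mem_prod, Set.mem_ofPred_eq] at hyz
    have h : (y + z) * e = y := by rw [add_mul, hyz.1.2, hyz.2.2, add_zero]
    simp [h]

theorem card_fixed_mul_swap {p q : R} (hp : p * q * p = p) (hq : q * p * q = q) (c : R) :
    #{y ∈ rightMultiples c | y * (q * p) = y} = #{y ∈ rightMultiples c | y * (p * q) = y} := by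
  refine card_nbij' (· * q) (· * p) ?_ ?_ ?_ ?_ <;>
    simp only [coe_filter, Set.MapsTo, Set.LeftInvOn, Set.mem_ofPred_eq, and_imp]
  · intro y hy _
    exact ⟨mul_mem_rightMultiples hy q, by rw [mul_assoc, ← mul_assoc q, hq]⟩
  · intro y hy _
    exact ⟨mul_mem_rightMultiples hy p, by rw [mul_assoc, ← mul_assoc p, hp]⟩
  · intro y _ hy
    rw [mul_assoc, hy]
  · intro y _ hy
    rw [mul_assoc, hy]

theorem card_annihilated_mul_swap {p q : R} (hp : p * q * p = p) (hq : q * p * q = q) (c : R) :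
    #{y ∈ rightMultiples c | y * (q * p) = 0} = #{y ∈ rightMultiples c | y * (p * q) = 0} := by
  have hqp : IsIdempotentElem (q * p) := by rw [IsIdempotentElem, ← mul_assoc, hq]
  have hpq : IsIdempotentElem (p * q) := by rw [IsIdempotentElem, ← mul_assoc, hp]
  have hpos : 0 < #{y ∈ rightMultiples c | y * (p * q) = y} :=
    card_pos.2 ⟨0, mem_filter.2 ⟨mem_rightMultiples.2 ⟨0, mul_zero c⟩, zero_mul _⟩⟩
  have hcard := (card_rightMultiples_eq_mul hqp c).symm.trans (card_rightMultiples_eq_mul hpq c)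
  rw [card_fixed_mul_swap hp hq] at hcard
  exact Nat.eq_of_mul_eq_mul_left hpos hcard

def countGenerators (g : R) (D : Finset R) : ℕ := #{m | m * g = 0 ∧ rightMultiples m = D}

theorem card_annihilated_eq_sum_countGenerators (g c : R) :
    #{y ∈ rightMultiples c | y * g = 0} =
      ∑ D ∈ (rightMultiples c).powerset, countGenerators g D := by
  rw [card_eq_sum_card_fiberwise (f := rightMultiples) fun m hm =>
    mem_powerset.2 (rightMultiples_subset_of_mem (mem_filter.1 hm).1)]
  refine sum_congr rfl fun D hD => congrArg card ?_
  ext m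
  simp only [mem_filter, mem_univ, true_and]
  refine ⟨fun ⟨⟨_, hm⟩, hmD⟩ => ⟨hm, hmD⟩, fun ⟨hm, hmD⟩ => ⟨⟨?_, hm⟩, hmD⟩⟩
  exact mem_powerset.1 hD (hmD ▸ self_mem_rightMultiples m)

theorem countGenerators_eq_of_card_annihilated_eq {e f : R}
    (h : ∀ c : R, #{y ∈ rightMultiples c | y * e = 0} = #{y ∈ rightMultiples c | y * f = 0})
    (D : Finset R) : countGenerators e D = countGenerators f D := by
  induction D using Finset.strongInduction with
  | H D ih =>
    by_cases hD : ∃ c, rightMultiples c = D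
    · obtain ⟨c, rfl⟩ := hD
      have hc := h c
      have hself := mem_powerset_self (rightMultiples c)
      have hsmaller :
          ∑ D ∈ (rightMultiples c).powerset.erase (rightMultiples c), countGenerators e D =
            ∑ D ∈ (rightMultiples c).powerset.erase (rightMultiples c), countGenerators f D :=
        sum_congr rfl fun D' hD' =>
          ih D' ((mem_powerset.1 (mem_erase.1 hD').2).lt_of_ne (mem_erase.1 hD').1)
      rw [card_annihilated_eq_sum_countGenerators, card_annihilated_eq_sum_countGenerators,
        ← add_sum_erase _ _ hself, ← add_sum_erase _ _ hself, hsmaller] at hc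
      omega
    · have hzero (g : R) : countGenerators g D = 0 :=
        card_eq_zero.2 (filter_eq_empty_iff.2 fun m _ hm => hD ⟨m, hm.2⟩)
      rw [hzero, hzero]

theorem exists_mul_eq_zero_rightMultiples_eq {p q : R} (hp : p * q * p = p)
    (hq : q * p * q = q) :
    ∃ m : R, m * (q * p) = 0 ∧ rightMultiples m = rightMultiples (1 - p * q) := by
  have hf : (1 - p * q) * (p * q) = 0 := by
    rw [sub_mul, one_mul, ← mul_assoc, hp, sub_self]
  have hpos : 0 < countGenerators (q * p) (rightMultiples (1 - p * q)) := by
    rw [countGenerators_eq_of_card_annihilated_eq (card_annihilated_mul_swap hp hq)]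
    exact card_pos.2 ⟨1 - p * q, by simp [hf]⟩
  obtain ⟨m, hm⟩ := card_pos.1 hpos
  exact ⟨m, by simpa using hm⟩

end FiniteRing

/-- If `a` and `b` generate the same principal left ideal of a finite ring `R` with identity,
then there exists a unit `u` of `R` with `u * a = b`. -/
theorem exists_unit_mul_eq_of_principal_left_ideal_eq (R : Type*) [Ring R] [Fintype R]
    (a b : R) (h : Set.range (fun r : R => r * a) = Set.range (fun r : R => r * b)) :
    ∃ u : Rˣ, (u : R) * a = b := by
  classical
  obtain ⟨r, rfl⟩ : b ∈ Set.range fun r : R => r * a := by rw [h]; exact ⟨1, one_mul b⟩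
  obtain ⟨s, hs⟩ : a ∈ Set.range fun s : R => s * (r * a) := by rw [← h]; exact ⟨1, one_mul a⟩
  obtain ⟨p, q, hp, hq, hqpa, hpa⟩ :=
    exists_inverse_pair_of_mul_mul_eq_self (show s * r * a = a from (mul_assoc s r a).trans hs)
  obtain ⟨m, hm, hmR⟩ := exists_mul_eq_zero_rightMultiples_eq hp hq
  obtain ⟨w, hw⟩ := mem_rightMultiples.1 (hmR ▸ self_mem_rightMultiples (1 - p * q))
  refine ⟨Units.mkOfMulEqOne (p + m) _ (add_mul_add_eq_one hp hq hm hw), ?_⟩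
  rw [Units.val_mkOfMulEqOne, add_mul, hpa, ← hqpa, ← mul_assoc m, hm, zero_mul, add_zero]
end

section
/- For a finite ring R with identity and a ∈ R, the group of units U_R acts transitively on the set S_a of generators of the principal left ideal I_a by left multiplication, and the map u ↦ u*a induces a U_R-equivariant bijection between the left cosets U_R/LStab(a) and S_a, where LStab(a) = {u ∈ U_R : u*a = a}. -/
/-!
If `R * x = R * y`, write `y = t * x` and `x = s * y`. Left multiplications by `t` and `s` are
endomorphisms of `R` as a right `R`-module, and `s * t` fixes `x`. Fitting's lemma for `s * t`
and `t * s` splits `R = I₁ ⊕ K₁ = I₂ ⊕ K₂` so that `t` maps `I₁ ∋ x` isomorphically onto `I₂`.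
Cancellation of finite modules, which follows from Lovász's count of homomorphisms, gives
`K₁ ≃ K₂`; together with `t` on `I₁` this is left multiplication by a unit `u`, and `u * x = y`.
So the generators of `R * a` form one orbit of `Rˣ`, and orbit–stabilizer gives the bijection.
-/

open Function

universe u

section FiniteModule

variable {A : Type*} [Ring A]

instance Submodule.finite_quotient {M : Type*} [AddCommGroup M] [Module A M] [Finite M]
    (N : Submodule A M) : Finite (M ⧸ N) :=
  Finite.of_surjective _ N.mkQ_surjective

instance LinearMap.finite {M N : Type*} [AddCommGroup M] [Module A M] [AddCommGroup N]
    [Module A N] [Finite M] [Finite N] : Finite (M →ₗ[A] N) :=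
  Finite.of_injective _ DFunLike.coe_injective

variable {X Y : Type*} [AddCommGroup X] [Module A X] [AddCommGroup Y] [Module A Y]

def Submodule.kerEqEquivInjective (N : Submodule A X) :
    {f : X →ₗ[A] Y // LinearMap.ker f = N} ≃ {g : X ⧸ N →ₗ[A] Y // Injective g} where
  toFun f := ⟨N.liftQ f.1 f.2.ge, LinearMap.ker_eq_bot.1 (N.ker_liftQ_eq_bot' _ f.2.symm)⟩
  invFun g := ⟨g.1 ∘ₗ N.mkQ, by
    rw [LinearMap.ker_comp, LinearMap.ker_eq_bot.2 g.2, Submodule.comap_bot, Submodule.ker_mkQ]⟩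
  left_inv f := Subtype.ext (N.liftQ_mkQ _ _)
  right_inv g := Subtype.ext (N.linearMap_qext (N.liftQ_mkQ _ _))

theorem card_linearMap_eq_sum_card_injective [Finite X] [Finite Y] [Fintype (Submodule A X)] :
    Nat.card (X →ₗ[A] Y) =
      ∑ N : Submodule A X, Nat.card {g : X ⧸ N →ₗ[A] Y // Injective g} := by
  rw [← Nat.card_congr (Equiv.sigmaFiberEquiv fun f : X →ₗ[A] Y => LinearMap.ker f),
    Nat.card_sigma]
  exact Finset.sum_congr rfl fun N _ => Nat.card_congr N.kerEqEquivInjective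

theorem Submodule.card_quotient_lt [Finite X] {N : Submodule A X} (hN : N ≠ ⊥) :
    Nat.card (X ⧸ N) < Nat.card X := by
  have hN' : 1 < Nat.card N.toAddSubgroup :=
    (AddSubgroup.one_lt_card_iff_ne_bot _).2 (by simpa [← Submodule.toAddSubgroup_inj] using hN)
  have hpos : 0 < Nat.card (X ⧸ N.toAddSubgroup) := Nat.card_pos
  rw [N.toAddSubgroup.card_eq_card_quotient_mul_card_addSubgroup]
  exact lt_mul_of_one_lt_right hpos hN'

variable {B C : Type u} [AddCommGroup B] [Module A B] [Finite B] [AddCommGroup C] [Module A C]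
  [Finite C]

/-- Lovász's argument: sorting the linear maps `X → B` by their kernel, the terms of all proper
quotients of `X` agree by induction, leaving the injective maps out of `X` itself. -/
theorem card_injective_linearMap_eq_of_forall_card_linearMap_eq
    (h : ∀ (X : Type u) [AddCommGroup X] [Module A X] [Finite X],
      Nat.card (X →ₗ[A] B) = Nat.card (X →ₗ[A] C))
    (X : Type u) [AddCommGroup X] [Module A X] [Finite X] :
    Nat.card {g : X →ₗ[A] B // Injective g} = Nat.card {g : X →ₗ[A] C // Injective g} := by
  induction hX : Nat.card X using Nat.strong_induction_on generalizing X with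
  | _ n ih =>
  classical
  let := Fintype.ofFinite (Submodule A X)
  have hsum := h X
  rw [card_linearMap_eq_sum_card_injective, card_linearMap_eq_sum_card_injective,
    ← Finset.add_sum_erase _ _ (Finset.mem_univ ⊥), ← Finset.add_sum_erase _ _ (Finset.mem_univ ⊥),
    Finset.sum_congr rfl fun N hN =>
      ih _ (hX ▸ Submodule.card_quotient_lt (Finset.ne_of_mem_erase hN)) (X ⧸ N) rfl] at hsum
  have hbot (Z : Type u) [AddCommGroup Z] [Module A Z] :
      {g : X ⧸ (⊥ : Submodule A X) →ₗ[A] Z // Injective g} ≃ {g : X →ₗ[A] Z // Injective g} :=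
    (Submodule.kerEqEquivInjective ⊥).symm.trans
      (Equiv.subtypeEquivRight fun _ => LinearMap.ker_eq_bot)
  rw [← Nat.card_congr (hbot B), ← Nat.card_congr (hbot C)]
  exact Nat.add_right_cancel hsum

theorem exists_injective_linearMap_of_forall_card_linearMap_eq
    (h : ∀ (X : Type u) [AddCommGroup X] [Module A X] [Finite X],
      Nat.card (X →ₗ[A] B) = Nat.card (X →ₗ[A] C)) :
    ∃ g : B →ₗ[A] C, Injective g := by
  have : Nonempty {g : B →ₗ[A] B // Injective g} := ⟨⟨LinearMap.id, injective_id⟩⟩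
  have hid : 0 < Nat.card {g : B →ₗ[A] B // Injective g} := Nat.card_pos
  rw [card_injective_linearMap_eq_of_forall_card_linearMap_eq h] at hid
  obtain ⟨⟨g, hg⟩⟩ := (Nat.card_pos_iff.1 hid).1
  exact ⟨g, hg⟩

theorem nonempty_linearEquiv_of_forall_card_linearMap_eq
    (h : ∀ (X : Type u) [AddCommGroup X] [Module A X] [Finite X],
      Nat.card (X →ₗ[A] B) = Nat.card (X →ₗ[A] C)) :
    Nonempty (B ≃ₗ[A] C) := by
  obtain ⟨f, hf⟩ := exists_injective_linearMap_of_forall_card_linearMap_eq h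
  obtain ⟨g, hg⟩ := exists_injective_linearMap_of_forall_card_linearMap_eq fun X _ _ _ => (h X).symm
  exact ⟨.ofBijective f (hf.bijective_of_nat_card_le (Nat.card_le_card_of_injective g hg))⟩

theorem nonempty_linearEquiv_of_prod_linearEquiv_prod {M : Type*} [AddCommGroup M] [Module A M]
    [Finite M] (e : (M × B) ≃ₗ[A] (M × C)) : Nonempty (B ≃ₗ[A] C) := by
  refine nonempty_linearEquiv_of_forall_card_linearMap_eq fun X _ _ _ => ?_
  have hprod (Y : Type u) [AddCommGroup Y] [Module A Y] :
      Nat.card (X →ₗ[A] M × Y) = Nat.card (X →ₗ[A] M) * Nat.card (X →ₗ[A] Y) := by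
    rw [← Nat.card_prod]
    exact Nat.card_congr (LinearMap.prodEquiv ℕ).toEquiv.symm
  have hpos : 0 < Nat.card (X →ₗ[A] M) := Nat.card_pos
  refine Nat.eq_of_mul_eq_mul_left hpos ?_
  rw [← hprod, ← hprod]
  exact Nat.card_congr (LinearEquiv.arrowCongrAddEquiv (.refl A X) e).toEquiv

end FiniteModule

namespace Module.End

variable {A : Type*} [Ring A] {M : Type u} [AddCommGroup M] [Module A M]

theorem mapsTo_range_pow_mul (f g : Module.End A M) (n : ℕ) :
    Set.MapsTo f (LinearMap.range ((g * f) ^ n)) (LinearMap.range ((f * g) ^ n)) := by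
  rintro _ ⟨z, rfl⟩
  have hcomm : f * (g * f) ^ n = (f * g) ^ n * f :=
    (SemiconjBy.pow_right (mul_assoc f g f).symm n).eq
  exact ⟨f z, by rw [← Module.End.mul_apply, ← hcomm, Module.End.mul_apply]⟩

theorem injOn_range_pow_mul (f g : Module.End A M) {n : ℕ} (hn : n ≠ 0)
    (h : Disjoint (LinearMap.ker ((g * f) ^ n)) (LinearMap.range ((g * f) ^ n))) :
    Set.InjOn f (LinearMap.range ((g * f) ^ n)) := by
  intro a ha b hb hab
  obtain ⟨m, rfl⟩ := Nat.exists_eq_succ_of_ne_zero hn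
  have hker : a - b ∈ LinearMap.ker ((g * f) ^ (m + 1)) := by
    rw [LinearMap.mem_ker, pow_succ, Module.End.mul_apply, Module.End.mul_apply, map_sub, hab,
      sub_self, map_zero, map_zero]
  exact sub_eq_zero.1 (Submodule.disjoint_def.1 h _ hker (sub_mem ha hb))

theorem bijective_restrict_range_pow_mul [Finite M] (f g : Module.End A M) {n : ℕ} (hn : n ≠ 0)
    (hgf : Disjoint (LinearMap.ker ((g * f) ^ n)) (LinearMap.range ((g * f) ^ n)))
    (hfg : Disjoint (LinearMap.ker ((f * g) ^ n)) (LinearMap.range ((f * g) ^ n))) :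
    Bijective (f.restrict (mapsTo_range_pow_mul f g n)) := by
  have hinj (f g : Module.End A M)
      (h : Disjoint (LinearMap.ker ((g * f) ^ n)) (LinearMap.range ((g * f) ^ n))) :
      Function.Injective (f.restrict (mapsTo_range_pow_mul f g n)) := fun a b hab =>
    Subtype.ext (injOn_range_pow_mul f g hn h a.2 b.2 (congrArg Subtype.val hab))
  exact (hinj f g hgf).bijective_of_nat_card_le
    (Nat.card_le_card_of_injective _ (hinj g f hfg))

theorem exists_linearEquiv_apply_eq [Finite M] (f g : Module.End A M) {x : M}
    (hx : g (f x) = x) : ∃ φ : M ≃ₗ[A] M, φ x = f x := by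
  obtain ⟨n, hn, hgf, hfg⟩ := ((Filter.eventually_ne_atTop 0).and
    ((g * f).eventually_isCompl_ker_pow_range_pow.and
      (f * g).eventually_isCompl_ker_pow_range_pow)).exists
  let F := LinearEquiv.ofBijective _ (bijective_restrict_range_pow_mul f g hn hgf.1 hfg.1)
  let e₁ := Submodule.prodEquivOfIsCompl _ _ hgf.symm
  let e₂ := Submodule.prodEquivOfIsCompl _ _ hfg.symm
  obtain ⟨ψ⟩ := nonempty_linearEquiv_of_prod_linearEquiv_prod
    ((F.symm.prodCongr (.refl A _)) ≪≫ₗ e₁ ≪≫ₗ e₂.symm)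
  have hxI : x ∈ LinearMap.range ((g * f) ^ n) :=
    ⟨x, by rw [Module.End.coe_pow]; exact IsFixedPt.iterate (f := ⇑(g * f)) hx n⟩
  refine ⟨e₁.symm ≪≫ₗ F.prodCongr ψ ≪≫ₗ e₂, ?_⟩
  simp only [e₁, e₂, F, LinearEquiv.trans_apply, LinearEquiv.prodCongr_apply, map_zero,
    Submodule.prodEquivOfIsCompl_symm_apply_left _ _ _ ⟨x, hxI⟩, LinearEquiv.ofBijective_apply,
    Submodule.coe_prodEquivOfIsCompl', ZeroMemClass.coe_zero, add_zero]
  rfl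

end Module.End

section Ring

variable {R : Type*} [Ring R]

theorem exists_unit_mul_eq_of_mul_mul_eq [Finite R] {s t x : R} (h : s * (t * x) = x) :
    ∃ u : Rˣ, u * x = t * x := by
  obtain ⟨φ, hφx⟩ := Module.End.exists_linearEquiv_apply_eq
    (RingEquiv.moduleEndSelfOp R t) (RingEquiv.moduleEndSelfOp R s) (x := x) (by simpa using h)
  have hmul (ψ : R ≃ₗ[Rᵐᵒᵖ] R) (z : R) : ψ z = ψ 1 * z := by
    simpa using ψ.map_smul (MulOpposite.op z) 1
  refine ⟨⟨φ 1, φ.symm 1, ?_, ?_⟩, ?_⟩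
  · rw [← hmul, φ.apply_symm_apply]
  · rw [← hmul, φ.symm_apply_apply]
  · simpa [← hmul] using hφx

theorem exists_unit_mul_eq_of_range_mul_eq [Finite R] {x y : R}
    (h : Set.range (fun r : R => r * x) = Set.range (fun r : R => r * y)) :
    ∃ u : Rˣ, u * x = y := by
  obtain ⟨t, hty⟩ : y ∈ Set.range (fun r : R => r * x) := h ▸ ⟨1, one_mul y⟩
  obtain ⟨s, hsx⟩ : x ∈ Set.range (fun r : R => r * y) := h ▸ ⟨1, one_mul x⟩
  simp only at hty hsx
  rw [← hty]
  exact exists_unit_mul_eq_of_mul_mul_eq (s := s) (by rw [hty, hsx])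

theorem range_mul_units_mul (u : Rˣ) (a : R) :
    Set.range (fun r : R => r * (u * a)) = Set.range (fun r : R => r * a) := by
  ext z
  constructor
  · rintro ⟨r, rfl⟩
    exact ⟨r * u, mul_assoc r u a⟩
  · rintro ⟨r, rfl⟩
    exact ⟨r * ↑u⁻¹, by simp [mul_assoc]⟩

def leftIdealGenerators (a : R) : Set R :=
  {x | x ∈ Set.range (fun r : R => r * a) ∧
    Set.range (fun r : R => r * x) = Set.range (fun r : R => r * a)}

theorem orbit_units_eq_leftIdealGenerators [Finite R] (a : R) :
    MulAction.orbit Rˣ a = leftIdealGenerators a := by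
  ext x
  constructor
  · rintro ⟨u, rfl⟩
    exact ⟨⟨u, rfl⟩, range_mul_units_mul u a⟩
  · rintro ⟨-, hx⟩
    exact exists_unit_mul_eq_of_range_mul_eq hx.symm

end Ring

/-- The unit group `U_R` acts transitively on the set `S_a` of generators of the principal left
ideal `I_a` by left multiplication, and `u ↦ u * a` induces a `U_R`-equivariant bijection
between `U_R / LStab(a)` and `S_a`. -/
theorem units_act_transitively_on_generators (R : Type*) [Ring R] [Fintype R] (a : R) :
    (∀ x ∈ {x : R | x ∈ Set.range (fun r : R => r * a) ∧
        Set.range (fun r : R => r * x) = Set.range (fun r : R => r * a)},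
      ∀ y ∈ {x : R | x ∈ Set.range (fun r : R => r * a) ∧
        Set.range (fun r : R => r * x) = Set.range (fun r : R => r * a)},
      ∃ u : Rˣ, (u : R) * x = y) ∧
    ∃ e : (Rˣ ⧸ MulAction.stabilizer Rˣ a) ≃
        {x : R | x ∈ Set.range (fun r : R => r * a) ∧
          Set.range (fun r : R => r * x) = Set.range (fun r : R => r * a)},
      (∀ u : Rˣ, (e (QuotientGroup.mk u) : R) = (u : R) * a) ∧
      ∀ (u : Rˣ) (c : Rˣ ⧸ MulAction.stabilizer Rˣ a),
        (e (u • c) : R) = (u : R) * (e c : R) := by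
  refine ⟨fun x hx y hy => exists_unit_mul_eq_of_range_mul_eq (hx.2.trans hy.2.symm),
    (MulAction.orbitEquivQuotientStabilizer Rˣ a).symm.trans
      (Equiv.setCongr (orbit_units_eq_leftIdealGenerators a)),
    fun u => rfl, MulAction.ofQuotientStabilizer_smul Rˣ a⟩
end

section
/- For distinct characters χ_1 ≠ χ_2 of F_q^×, the induced representation ρ_{χ_1,χ_2} = Ind_B^{GL_2(F_q)}(χ_{1,2}) is irreducible, where B is the Borel subgroup of upper triangular matrices and χ_{1,2}([[u,w],[0,v]]) = χ_1(u)χ_2(v). -/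
open CategoryTheory Module

variable {G : Type} [Group G] [Fintype G]

/-- The space of the representation of `G` induced from a one-dimensional character `χ` of a
subgroup `H` (for the trivial character this is `Ind_H^G 1`): the subspace of functions
`f : G → ℂ` with `f (b * g) = χ b * f g` for `b ∈ H`, with `G` acting by right translation. -/
noncomputable def indCarrier (H : Subgroup G) (χ : G → ℂ) : Submodule ℂ (G → ℂ) where
  carrier := {f | ∀ b ∈ H, ∀ g : G, f (b * g) = χ b * f g}
  add_mem' := by
    intro f g hf hg b hb x
    simp only [Pi.add_apply, hf b hb x, hg b hb x, mul_add]
  zero_mem' := by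
    intro b hb x; simp
  smul_mem' := by
    intro c f hf b hb x
    simp only [Pi.smul_apply, smul_eq_mul, hf b hb x]
    ring

/-- The induced representation `Ind_H^G χ`, as right translation on `indCarrier H χ`. -/
noncomputable def indRep (H : Subgroup G) (χ : G → ℂ) : Representation ℂ G (indCarrier H χ) where
  toFun g :=
    { toFun := fun f => ⟨fun x => (f : G → ℂ) (x * g), fun b hb x => by
        simpa [mul_assoc] using f.2 b hb (x * g)⟩
      map_add' := fun f h => rfl
      map_smul' := fun c f => rfl }
  map_one' := by
    ext f x
    simp
  map_mul' := fun g h => by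
    ext f x
    simp [mul_assoc]

noncomputable example (H : Subgroup G) (χ : G → ℂ) : FDRep ℂ G := FDRep.of (indRep H χ)

variable (F : Type) [Field F] [Fintype F] [DecidableEq F]

/-- The BorelGL2 subgroup of upper triangular matrices in `GL_2(F)`. -/
def BorelGL2 : Subgroup (GL (Fin 2) F) where
  carrier := {g | (g : Matrix (Fin 2) (Fin 2) F) 1 0 = 0}
  one_mem' := by simp [Set.mem_setOf_eq, Matrix.one_apply]
  mul_mem' := by
    intro a b ha hb
    simp only [Set.mem_setOf_eq, Units.val_mul, Matrix.mul_apply, Fin.sum_univ_two] at *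
    rw [ha, hb]
    ring
  inv_mem' := by
    intro a ha
    simp only [Set.mem_setOf_eq] at *
    have h1 : (a : Matrix (Fin 2) (Fin 2) F) * ((a⁻¹ : GL (Fin 2) F) : Matrix (Fin 2) (Fin 2) F)
        = 1 := a.mul_inv
    have h2 := congrFun (congrFun h1 1) 0
    simp only [Matrix.mul_apply, Fin.sum_univ_two, Matrix.one_apply, ha] at h2
    have hdet : ((a : Matrix (Fin 2) (Fin 2) F)).det ≠ 0 :=
      ((Matrix.isUnit_iff_isUnit_det _).mp a.isUnit).ne_zero
    have h11 : (a : Matrix (Fin 2) (Fin 2) F) 1 1 ≠ 0 := by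
      intro h
      apply hdet
      rw [Matrix.det_fin_two, ha, h]
      ring
    rcases (by simpa using h2 : (a : Matrix (Fin 2) (Fin 2) F) 1 1 = 0 ∨
        ((a⁻¹ : GL (Fin 2) F) : Matrix (Fin 2) (Fin 2) F) 1 0 = 0) with h | h
    · exact absurd h h11
    · exact h

/-- The subgroup `P` of `GL_2(F)` of matrices of the form `[[1, y], [0, w]]`. -/
def mirabolic : Subgroup (GL (Fin 2) F) where
  carrier := {g | (g : Matrix (Fin 2) (Fin 2) F) 0 0 = 1 ∧
    (g : Matrix (Fin 2) (Fin 2) F) 1 0 = 0}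
  one_mem' := by simp [Set.mem_setOf_eq, Matrix.one_apply]
  mul_mem' := by
    intro a b ha hb
    simp only [Set.mem_setOf_eq, Units.val_mul, Matrix.mul_apply, Fin.sum_univ_two] at *
    rw [ha.1, ha.2, hb.1, hb.2]
    constructor <;> ring
  inv_mem' := by
    intro a ha
    simp only [Set.mem_setOf_eq] at *
    have h1 : ((a⁻¹ : GL (Fin 2) F) : Matrix (Fin 2) (Fin 2) F) * (a : Matrix (Fin 2) (Fin 2) F)
        = 1 := a.inv_mul
    have h00 := congrFun (congrFun h1 0) 0
    have h10 := congrFun (congrFun h1 1) 0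
    simp only [Matrix.mul_apply, Fin.sum_univ_two, Matrix.one_apply, ha.1, ha.2, mul_one,
      mul_zero, add_zero] at h00 h10
    exact ⟨by simpa using h00, by simpa using h10⟩

/-- The extension by zero of a character of `F^×` to `F`. -/
noncomputable def extChar (χ : Fˣ →* ℂˣ) : F → ℂ :=
  fun x => if h : IsUnit x then (χ h.unit : ℂ) else 0

/-!
By the converse of Schur's lemma (over `ℂ`, via Maschke), it suffices that every
`G`-endomorphism `φ` of `Ind_B^G χ` is a scalar. The function `δ` supported on `B`, where it
equals `χ`, generates `Ind_B^G χ` under right translation, so `φ` is determined by `φ δ`, a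
function that is `χ`-equivariant under `B` on both sides. Such a function vanishes off `B`: every
`x ∉ B` satisfies `b x b' = x` for some `b = [[u, β], [0, 1]]` and `b' = [[1, β'], [0, u⁻¹]]`,
and `χ(b) χ(b') = χ₁(u) / χ₂(u)`, which is `≠ 1` for a suitable `u` as `χ₁ ≠ χ₂`.
Hence `φ δ` is a multiple of `δ`.
-/

universe u

theorem FDRep.simple_of_forall_commute_eq_smul {k : Type u} [Field k] [IsAlgClosed k]
    {G : Type u} [Group G] [Finite G] [NeZero (Nat.card G : k)]
    {V : Type u} [AddCommGroup V] [Module k V] [FiniteDimensional k V] [Nontrivial V]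
    (ρ : Representation k G V)
    (h : ∀ φ : V →ₗ[k] V, (∀ g, φ ∘ₗ ρ g = ρ g ∘ₗ φ) → ∃ c : k, φ = c • LinearMap.id) :
    Simple (FDRep.of ρ) := by
  rw [FDRep.simple_iff_end_is_rank_one, finrank_eq_one_iff_of_nonzero' (𝟙 _)]
  · intro f
    obtain ⟨c, hc⟩ := h f.hom.hom.hom fun g =>
      LinearMap.ext fun v => ConcreteCategory.congr_hom (f.comm g) v
    refine ⟨c, ?_⟩
    ext v
    exact (LinearMap.congr_fun hc v).symm
  · intro h1
    obtain ⟨v, hv⟩ := exists_ne (0 : V)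
    exact hv (congrArg (fun f : FDRep.of ρ ⟶ FDRep.of ρ => f.hom.hom.hom v) h1)

structure IsMulCharOn {G : Type} [Group G] (H : Subgroup G) (χ : G → ℂ) : Prop where
  map_one : χ 1 = 1
  map_mul : ∀ b ∈ H, ∀ c ∈ H, χ (b * c) = χ b * χ c

namespace IsMulCharOn

variable {G : Type} [Group G] {H : Subgroup G} {χ : G → ℂ}

theorem map_inv_mul (hχ : IsMulCharOn H χ) {b : G} (hb : b ∈ H) : χ b⁻¹ * χ b = 1 := by
  rw [← hχ.map_mul _ (H.inv_mem hb) _ hb, inv_mul_cancel, hχ.map_one]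

end IsMulCharOn

section Induced

variable {G : Type} [Group G] {H : Subgroup G} {χ : G → ℂ}

@[simp]
theorem indRep_apply (g : G) (f : indCarrier H χ) (x : G) :
    (indRep H χ g f : G → ℂ) x = (f : G → ℂ) (x * g) := rfl

theorem indicator_mem_indCarrier (hχ : IsMulCharOn H χ) :
    (H : Set G).indicator χ ∈ indCarrier H χ := by
  intro b hb g
  by_cases hg : g ∈ H
  · rw [Set.indicator_of_mem (H.mul_mem hb hg), Set.indicator_of_mem hg, hχ.map_mul b hb g hg]
  · rw [Set.indicator_of_notMem hg, Set.indicator_of_notMem ((H.mul_mem_cancel_left hb).not.2 hg),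
      mul_zero]

noncomputable def indDelta (hχ : IsMulCharOn H χ) : indCarrier H χ :=
  ⟨(H : Set G).indicator χ, indicator_mem_indCarrier hχ⟩

theorem indDelta_apply (hχ : IsMulCharOn H χ) (x : G) :
    (indDelta hχ : G → ℂ) x = (H : Set G).indicator χ x := rfl

theorem indDelta_ne_zero (hχ : IsMulCharOn H χ) : indDelta hχ ≠ 0 := by
  intro h0
  have := congrFun (congrArg Subtype.val h0) 1
  rw [indDelta_apply, Set.indicator_of_mem H.one_mem, hχ.map_one] at this
  exact one_ne_zero this

theorem indRep_indDelta_of_mem (hχ : IsMulCharOn H χ) {b : G} (hb : b ∈ H) :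
    indRep H χ b (indDelta hχ) = χ b • indDelta hχ := by
  ext x
  rw [indRep_apply, Submodule.coe_smul, Pi.smul_apply, smul_eq_mul, indDelta_apply, indDelta_apply]
  by_cases hx : x ∈ H
  · rw [Set.indicator_of_mem (H.mul_mem hx hb), Set.indicator_of_mem hx, hχ.map_mul x hx b hb,
      mul_comm]
  · rw [Set.indicator_of_notMem hx, Set.indicator_of_notMem ((H.mul_mem_cancel_right hb).not.2 hx),
      mul_zero]

theorem sum_smul_indRep_inv_indDelta [Fintype G] (hχ : IsMulCharOn H χ) (f : indCarrier H χ) :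
    ∑ g, (f : G → ℂ) g • indRep H χ g⁻¹ (indDelta hχ) = (Nat.card H : ℂ) • f := by
  ext x
  simp only [Submodule.coe_sum, Submodule.coe_smul, Finset.sum_apply, Pi.smul_apply, smul_eq_mul,
    indRep_apply, indDelta_apply]
  classical
  calc ∑ g, (f : G → ℂ) g * (H : Set G).indicator χ (x * g⁻¹)
      = ∑ b, (H : Set G).indicator (fun b => (f : G → ℂ) (b⁻¹ * x) * χ b) b := by
        refine Fintype.sum_equiv ((Equiv.inv G).trans (Equiv.mulLeft x)) _ _ fun g => ?_
        have hg : (x * g⁻¹)⁻¹ * x = g := by group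
        simp only [Set.indicator_apply, Equiv.trans_apply, Equiv.inv_apply, Equiv.coe_mulLeft, hg,
          mul_ite, mul_zero]
    _ = ∑ b, (H : Set G).indicator (fun _ => (f : G → ℂ) x) b := by
        refine congrArg _ (funext <| congrFun <| Set.indicator_congr fun b hb => ?_)
        rw [f.2 _ (H.inv_mem hb), mul_right_comm, hχ.map_inv_mul hb, one_mul]
    _ = (Nat.card H : ℂ) * (f : G → ℂ) x := by
        simp [Set.indicator_apply, Finset.sum_ite, Nat.card_eq_fintype_card, Fintype.card_subtype]

theorem span_range_indRep_indDelta [Fintype G] (hχ : IsMulCharOn H χ) :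
    Submodule.span ℂ (Set.range fun g => indRep H χ g (indDelta hχ)) = ⊤ := by
  refine Submodule.eq_top_iff'.2 fun f => ?_
  have hcard : (Nat.card H : ℂ) ≠ 0 := Nat.cast_ne_zero.2 Nat.card_pos.ne'
  rw [← inv_smul_smul₀ hcard f, ← sum_smul_indRep_inv_indDelta hχ]
  exact Submodule.smul_mem _ _ <| Submodule.sum_mem _ fun g _ =>
    Submodule.smul_mem _ _ <| Submodule.subset_span ⟨g⁻¹, rfl⟩

theorem eq_zero_of_mul_mul_eq_self {f : G → ℂ} (hleft : ∀ b ∈ H, ∀ x, f (b * x) = χ b * f x)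
    (hright : ∀ b ∈ H, ∀ x, f (x * b) = χ b * f x) {b b' x : G} (hb : b ∈ H) (hb' : b' ∈ H)
    (hx : b * x * b' = x) (hχ : χ b * χ b' ≠ 1) : f x = 0 := by
  have h := congrArg f hx
  rw [hright b' hb', hleft b hb] at h
  have : (χ b * χ b' - 1) * f x = 0 := by linear_combination h
  exact (mul_eq_zero.1 this).resolve_left (sub_ne_zero.2 hχ)

theorem eq_smul_indDelta (hχ : IsMulCharOn H χ)
    (hreg : ∀ x ∉ H, ∃ b ∈ H, ∃ b' ∈ H, b * x * b' = x ∧ χ b * χ b' ≠ 1) (f : indCarrier H χ)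
    (hright : ∀ b ∈ H, ∀ x, (f : G → ℂ) (x * b) = χ b * (f : G → ℂ) x) :
    f = (f : G → ℂ) 1 • indDelta hχ := by
  ext x
  rw [Submodule.coe_smul, Pi.smul_apply, smul_eq_mul, indDelta_apply]
  by_cases hx : x ∈ H
  · rw [Set.indicator_of_mem hx, mul_comm, ← f.2 x hx 1, mul_one]
  · obtain ⟨b, hb, b', hb', hbx, hne⟩ := hreg x hx
    rw [Set.indicator_of_notMem hx, mul_zero]
    exact eq_zero_of_mul_mul_eq_self f.2 hright hb hb' hbx hne

theorem exists_eq_smul_id_of_commute_indRep [Fintype G] (hχ : IsMulCharOn H χ)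
    (hreg : ∀ x ∉ H, ∃ b ∈ H, ∃ b' ∈ H, b * x * b' = x ∧ χ b * χ b' ≠ 1)
    (φ : indCarrier H χ →ₗ[ℂ] indCarrier H χ)
    (hφ : ∀ g, φ ∘ₗ indRep H χ g = indRep H χ g ∘ₗ φ) :
    ∃ c : ℂ, φ = c • LinearMap.id := by
  have hφg (g : G) (v : indCarrier H χ) : φ (indRep H χ g v) = indRep H χ g (φ v) :=
    LinearMap.congr_fun (hφ g) v
  set δ := indDelta hχ
  have hright (b : G) (hb : b ∈ H) (x : G) :
      (φ δ : G → ℂ) (x * b) = χ b * (φ δ : G → ℂ) x := by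
    rw [← indRep_apply, ← hφg, indRep_indDelta_of_mem hχ hb, map_smul]
    rfl
  obtain ⟨c, hc⟩ : ∃ c : ℂ, φ δ = c • δ := ⟨_, eq_smul_indDelta hχ hreg (φ δ) hright⟩
  refine ⟨c, LinearMap.ext_on_range (span_range_indRep_indDelta hχ) fun g => ?_⟩
  rw [hφg, hc, map_smul]
  rfl

end Induced

section Borel

variable {F : Type} [Field F]

theorem extChar_eq_ofUnitHom [Fintype F] [DecidableEq F] (χ : Fˣ →* ℂˣ) :
    extChar F χ = MulChar.ofUnitHom χ := by
  funext x
  by_cases hx : IsUnit x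
  · obtain ⟨u, rfl⟩ := hx
    simp [extChar]
  · rw [extChar, dif_neg hx, MulChar.map_nonunit _ hx]

noncomputable def borelChar [Fintype F] [DecidableEq F] (χ1 χ2 : Fˣ →* ℂˣ) :
    GL (Fin 2) F → ℂ :=
  fun g => extChar F χ1 ((g : Matrix (Fin 2) (Fin 2) F) 0 0) *
    extChar F χ2 ((g : Matrix (Fin 2) (Fin 2) F) 1 1)

theorem isMulCharOn_borelChar [Fintype F] [DecidableEq F] (χ1 χ2 : Fˣ →* ℂˣ) :
    IsMulCharOn (BorelGL2 F) (borelChar χ1 χ2) where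
  map_one := by simp [borelChar, extChar_eq_ofUnitHom]
  map_mul b hb c hc := by
    have hb : (b : Matrix (Fin 2) (Fin 2) F) 1 0 = 0 := hb
    have hc : (c : Matrix (Fin 2) (Fin 2) F) 1 0 = 0 := hc
    simp only [borelChar, extChar_eq_ofUnitHom, Matrix.GeneralLinearGroup.coe_mul, Matrix.mul_apply,
      Fin.sum_univ_two, hb, hc, mul_zero, zero_mul, add_zero, zero_add, map_mul]
    ring

noncomputable def upperGL (p q : Fˣ) (β : F) : GL (Fin 2) F :=
  Matrix.GeneralLinearGroup.mkOfDetNeZero !![(p : F), β; 0, (q : F)] (by simp [Matrix.det_fin_two])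

theorem upperGL_mem_borel (p q : Fˣ) (β : F) : upperGL p q β ∈ BorelGL2 F := by
  simp [BorelGL2, upperGL]

theorem borelChar_upperGL [Fintype F] [DecidableEq F] (χ1 χ2 : Fˣ →* ℂˣ) (p q : Fˣ) (β : F) :
    borelChar χ1 χ2 (upperGL p q β) = χ1 p * χ2 q := by
  simp [borelChar, upperGL, extChar_eq_ofUnitHom]

theorem exists_upperGL_mul_mul_upperGL_eq_self {x : GL (Fin 2) F} (hx : x ∉ BorelGL2 F)
    (u : Fˣ) : ∃ β β' : F, upperGL u 1 β * x * upperGL 1 u⁻¹ β' = x := by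
  obtain ⟨a, b, c, d, hx'⟩ : ∃ a b c d : F, (x : Matrix (Fin 2) (Fin 2) F) = !![a, b; c, d] :=
    ⟨_, _, _, _, Matrix.eta_fin_two _⟩
  have hc : c ≠ 0 := by simpa [BorelGL2, hx'] using hx
  -- the (0,0) and (1,1) entries force β and β'; the (0,1) entry then holds automatically
  refine ⟨a * (1 - u) / c, d * (1 - (u : F)⁻¹) / c, Units.ext ?_⟩
  simp only [Units.val_mul, hx', upperGL, Matrix.GeneralLinearGroup.val_mkOfDetNeZero,
    Matrix.mul_fin_two]
  ext i j
  fin_cases i <;> fin_cases j <;> simp <;> field_simp <;> ring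

theorem exists_borel_mul_mul_eq_self_borelChar_ne_one [Fintype F] [DecidableEq F]
    {χ1 χ2 : Fˣ →* ℂˣ} (h : χ1 ≠ χ2) (x : GL (Fin 2) F) (hx : x ∉ BorelGL2 F) :
    ∃ b ∈ BorelGL2 F, ∃ b' ∈ BorelGL2 F,
      b * x * b' = x ∧ borelChar χ1 χ2 b * borelChar χ1 χ2 b' ≠ 1 := by
  obtain ⟨u, hu⟩ : ∃ u, χ1 u ≠ χ2 u := DFunLike.ne_iff.1 h
  obtain ⟨β, β', hβ⟩ := exists_upperGL_mul_mul_upperGL_eq_self hx u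
  refine ⟨_, upperGL_mem_borel _ _ _, _, upperGL_mem_borel _ _ _, hβ, ?_⟩
  rw [borelChar_upperGL, borelChar_upperGL, map_one, map_one, map_inv, Units.val_one, mul_one,
    one_mul, Units.val_inv_eq_inv_val, ← div_eq_mul_inv, Ne, div_eq_one_iff_eq (χ2 u).ne_zero,
    Units.val_inj]
  exact hu

end Borel

/-- For distinct characters `χ₁ ≠ χ₂` of `F^×`, the principal series representation
`ρ_{χ₁,χ₂} = Ind_B^{GL_2(F)}(χ_{1,2})`, with `χ_{1,2}([[u,w],[0,v]]) = χ₁(u)χ₂(v)`,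
is irreducible. -/
theorem principal_series_irreducible (F : Type) [Field F] [Fintype F] [DecidableEq F]
    (χ1 χ2 : Fˣ →* ℂˣ) (h : χ1 ≠ χ2) :
    CategoryTheory.Simple (FDRep.of (indRep (BorelGL2 F)
      (fun g => extChar F χ1 ((g : Matrix (Fin 2) (Fin 2) F) 0 0) *
        extChar F χ2 ((g : Matrix (Fin 2) (Fin 2) F) 1 1)))) := by
  have hχ := isMulCharOn_borelChar (F := F) χ1 χ2
  have : Nontrivial (indCarrier (BorelGL2 F) (borelChar χ1 χ2)) :=
    nontrivial_of_ne _ _ (indDelta_ne_zero hχ)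
  show Simple (FDRep.of (indRep (BorelGL2 F) (borelChar χ1 χ2)))
  exact FDRep.simple_of_forall_commute_eq_smul _ fun φ hφ =>
    exists_eq_smul_id_of_commute_indRep hχ (exists_borel_mul_mul_eq_self_borelChar_ne_one h) φ hφ
end

section
/- For a character χ of F_q^×, the endomorphism algebra of Ind_B^{GL_2(F_q)}(χ_{1,1}) has dimension 2 over C, where χ_{1,1}([[u,w],[0,v]]) = χ(u)χ(v); equivalently this induced representation is a direct sum of exactly two inequivalent irreducibles. -/
open CategoryTheory Module

variable {G : Type} [Group G] [Fintype G]

noncomputable example (H : Subgroup G) (χ : G → ℂ) : FDRep ℂ G := FDRep.of (indRep H χ)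

variable (F : Type) [Field F] [Fintype F] [DecidableEq F]

/-!
By Frobenius reciprocity, an endomorphism of `Ind_B^G χ₁₁` is determined by the image of the
function supported on `B`, which can be any function `f` on `G` with
`f (a * x * b) = χ₁₁ a * χ₁₁ b * f x` for `a b ∈ B`. On `B`, `χ₁₁` is the restriction of the
character `χ ∘ det` of `G`, so dividing by `χ ∘ det` identifies these functions with the functions
on `B \ G / B`. By the Bruhat decomposition `G = B ⊔ B w B` there are exactly two double cosets.
-/

omit [Fintype G] in
lemma DoubleCoset.mk_mul_mul {H : Subgroup G} {a b : G} (ha : a ∈ H) (hb : b ∈ H) (x : G) :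
    DoubleCoset.mk H H (a * x * b) = DoubleCoset.mk H H x :=
  ((DoubleCoset.eq H H x _).mpr ⟨a, ha, b, hb, rfl⟩).symm

omit [Fintype G] in
lemma DoubleCoset.mk_eq_mk_one_iff {H : Subgroup G} {g : G} :
    DoubleCoset.mk H H g = DoubleCoset.mk H H 1 ↔ g ∈ H := by
  rw [DoubleCoset.eq]
  constructor
  · rintro ⟨a, ha, b, hb, h⟩
    rw [show g = a⁻¹ * (a * g * b) * b⁻¹ by group, ← h, mul_one]
    exact H.mul_mem (H.inv_mem ha) (H.inv_mem hb)
  · exact fun hg => ⟨g⁻¹, H.inv_mem hg, 1, H.one_mem, by group⟩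

namespace indRep

variable {H : Subgroup G} {χ : G → ℂ} {θ : H →* ℂˣ} {ψ : G →* ℂˣ}

omit [Fintype G] in
lemma map_mul_of_mem (hχ : ∀ b : H, χ b = θ b) {a b : G} (ha : a ∈ H) (hb : b ∈ H) :
    χ (a * b) = χ a * χ b := by
  rw [hχ ⟨a, ha⟩, hχ ⟨b, hb⟩, ← Units.val_mul, ← map_mul]
  exact hχ ⟨a * b, H.mul_mem ha hb⟩

omit [Fintype G] in
lemma map_inv_mul_of_mem (hχ : ∀ b : H, χ b = θ b) {b : G} (hb : b ∈ H) :
    χ b⁻¹ * χ b = 1 := by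
  rw [← map_mul_of_mem hχ (H.inv_mem hb) hb, inv_mul_cancel, ← H.coe_one, hχ, map_one,
    Units.val_one]

variable (H χ) in
/-- A cyclic vector of `Ind_H^G χ`. -/
noncomputable def vec (hχ : ∀ b : H, χ b = θ b) : indCarrier H χ :=
  ⟨(H : Set G).indicator χ, fun b hb x => by
    by_cases hx : x ∈ H
    · simp [hx, H.mul_mem hb hx, map_mul_of_mem hχ hb hx]
    · simp [hx, H.mul_mem_cancel_left hb]⟩

omit [Fintype G] in
lemma indRep_vec (hχ : ∀ b : H, χ b = θ b) {b : G} (hb : b ∈ H) :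
    indRep H χ b (vec H χ hχ) = χ b • vec H χ hχ := by
  ext x
  by_cases hx : x ∈ H
  · simp [indRep, vec, hx, H.mul_mem hx hb, map_mul_of_mem hχ hx hb, mul_comm]
  · simp [indRep, vec, hx, H.mul_mem_cancel_right hb]

lemma sum_vec_smul (hχ : ∀ b : H, χ b = θ b) {M : Type*} [AddCommMonoid M] [Module ℂ M]
    (v : G → M) (hv : ∀ b ∈ H, v b = χ b⁻¹ • v 1) :
    ∑ x, (vec H χ hχ : G → ℂ) x • v x = (Nat.card H : ℂ) • v 1 := by
  classical
  calc ∑ x, (vec H χ hχ : G → ℂ) x • v x = ∑ x with x ∈ H, v 1 := by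
        rw [Finset.sum_filter]
        refine Finset.sum_congr rfl fun x _ => ?_
        by_cases hx : x ∈ H
        · simp [vec, hx, hv x hx, smul_smul, mul_comm (χ x), map_inv_mul_of_mem hχ hx]
        · simp [vec, hx]
    _ = (Nat.card H : ℂ) • v 1 := by
        rw [Finset.sum_const, Nat.card_eq_fintype_card, Fintype.card_subtype,
          Nat.cast_smul_eq_nsmul]

lemma sum_smul_indRep_inv_vec (hχ : ∀ b : H, χ b = θ b) (f : indCarrier H χ) :
    ∑ x, (f : G → ℂ) x • indRep H χ x⁻¹ (vec H χ hχ) = (Nat.card H : ℂ) • f := by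
  ext y
  have hf : ∀ b ∈ H, (f : G → ℂ) (b⁻¹ * y) = χ b⁻¹ • (f : G → ℂ) (1⁻¹ * y) := fun b hb => by
    simpa using f.2 b⁻¹ (H.inv_mem hb) y
  simpa using (Fintype.sum_equiv ((Equiv.inv G).trans (Equiv.mulLeft y)) _ _ (fun x => by
    simp [indRep, mul_comm])).trans (sum_vec_smul hχ (fun x => (f : G → ℂ) (x⁻¹ * y)) hf)

variable {W : Type*} [AddCommGroup W] [Module ℂ W] (σ : Representation ℂ G W)

variable (H χ) in
noncomputable def lift (w : W) : (indRep H χ).IntertwiningMap σ :=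
  LinearMap.intertwiningMap_of_isIntertwiningMap (indRep H χ) σ
    { toFun := fun f => (Nat.card H : ℂ)⁻¹ • ∑ x, (f : G → ℂ) x • σ x⁻¹ w
      map_add' := fun f f' => by simp [add_smul, Finset.sum_add_distrib]
      map_smul' := fun c f => by simp [Finset.smul_sum, smul_smul, mul_left_comm] }
    fun g f => by
      simp only [LinearMap.coe_mk, AddHom.coe_mk, map_smul, map_sum]
      congr 1
      exact Fintype.sum_equiv (Equiv.mulRight g) _ _ fun x => by
        simp [indRep, ← Module.End.mul_apply, ← map_mul]

lemma lift_apply (w : W) (f : indCarrier H χ) :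
    lift H χ σ w f = (Nat.card H : ℂ)⁻¹ • ∑ x, (f : G → ℂ) x • σ x⁻¹ w := rfl

variable (H) in
/-- Frobenius reciprocity for `Ind_H^G χ`: an intertwiner is determined by the image of `vec`,
which can be any `χ`-eigenvector of `H`. -/
noncomputable def intertwiningMapEquiv (hχ : ∀ b : H, χ b = θ b) :
    (indRep H χ).IntertwiningMap σ ≃ₗ[ℂ] ↥(⨅ b : H, Module.End.eigenspace (σ b) (χ b)) where
  toFun φ := ⟨φ (vec H χ hχ), by
    simp only [Submodule.mem_iInf, Module.End.mem_eigenspace_iff, ← φ.isIntertwining]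
    exact fun b => by rw [indRep_vec hχ b.2, map_smul]⟩
  map_add' _ _ := rfl
  map_smul' _ _ := rfl
  invFun w := lift H χ σ w
  left_inv φ := by
    refine Representation.IntertwiningMap.ext (LinearMap.ext fun f => ?_)
    have hc : (Nat.card H : ℂ) ≠ 0 := Nat.cast_ne_zero.mpr Nat.card_pos.ne'
    calc lift H χ σ (φ (vec H χ hχ)) f
        = φ ((Nat.card H : ℂ)⁻¹ • ∑ x, (f : G → ℂ) x • indRep H χ x⁻¹ (vec H χ hχ)) := by
          simp [lift_apply, φ.isIntertwining]
      _ = φ f := by rw [sum_smul_indRep_inv_vec, smul_smul, inv_mul_cancel₀ hc, one_smul]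
  right_inv w := by
    ext
    have hw : ∀ b ∈ H, σ b⁻¹ w = χ b⁻¹ • σ 1⁻¹ w := fun b hb => by
      simpa [Module.End.mem_eigenspace_iff] using
        Submodule.mem_iInf _ |>.mp w.2 ⟨b⁻¹, H.inv_mem hb⟩
    have hc : (Nat.card H : ℂ) ≠ 0 := Nat.cast_ne_zero.mpr Nat.card_pos.ne'
    simp [lift_apply, sum_vec_smul hχ (fun x => σ x⁻¹ w) hw, smul_smul, hc]

omit [Fintype G] in
lemma mem_iInf_eigenspace_iff {f : indCarrier H χ} :
    f ∈ ⨅ b : H, Module.End.eigenspace (indRep H χ b) (χ b) ↔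
      ∀ b ∈ H, ∀ x, (f : G → ℂ) (x * b) = χ b * (f : G → ℂ) x := by
  simp only [Submodule.mem_iInf, Module.End.mem_eigenspace_iff, Subtype.forall, Subtype.ext_iff,
    funext_iff]
  rfl

omit [Fintype G] in
lemma apply_mul_mul (hχ : ∀ b : H, χ b = ψ b) {f : indCarrier H χ}
    (hf : f ∈ ⨅ b : H, Module.End.eigenspace (indRep H χ b) (χ b)) {a b : G} (ha : a ∈ H)
    (hb : b ∈ H) (x : G) :
    (f : G → ℂ) (a * x * b) = ψ a * ψ b * (f : G → ℂ) x := by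
  rw [mem_iInf_eigenspace_iff.mp hf b hb, mul_assoc, f.2 a ha, hχ ⟨a, ha⟩, hχ ⟨b, hb⟩]
  ring

variable (H χ) in
noncomputable def eigenspaceEquiv (hχ : ∀ b : H, χ b = ψ b) :
    ↥(⨅ b : H, Module.End.eigenspace (indRep H χ b) (χ b)) ≃ₗ[ℂ]
      (DoubleCoset.Quotient (H : Set G) H → ℂ) where
  toFun f := Quotient.lift (s := DoubleCoset.setoid (H : Set G) H)
    (fun g => (ψ g : ℂ)⁻¹ * ((f : indCarrier H χ) : G → ℂ) g) (fun x y hxy => by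
      obtain ⟨a, ha, b, hb, rfl⟩ := DoubleCoset.rel_iff.mp hxy
      simp only [apply_mul_mul hχ f.2 ha hb, map_mul, Units.val_mul]
      field_simp)
  map_add' f f' := funext <| Quotient.ind fun _ => mul_add _ _ _
  map_smul' c f := funext <| Quotient.ind fun _ => mul_left_comm _ _ _
  invFun u := ⟨⟨fun g => ψ g * u (DoubleCoset.mk H H g), fun b hb g => by
      dsimp only
      rw [← mul_one (b * g), DoubleCoset.mk_mul_mul hb H.one_mem, hχ ⟨b, hb⟩, mul_one, map_mul,
        Units.val_mul, mul_assoc]⟩, mem_iInf_eigenspace_iff.mpr fun b hb g => by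
      dsimp only
      rw [← one_mul (g * b), ← mul_assoc, DoubleCoset.mk_mul_mul H.one_mem hb, hχ ⟨b, hb⟩, one_mul,
        map_mul, Units.val_mul]
      ring⟩
  left_inv f := by ext; simp
  right_inv u := funext <| Quotient.ind fun _ => by simp

theorem finrank_end_eq_card_doubleCoset (hχ : ∀ b : H, χ b = ψ b) :
    finrank ℂ (FDRep.of (indRep H χ) ⟶ FDRep.of (indRep H χ)) =
      Nat.card (DoubleCoset.Quotient (H : Set G) H) := by
  have : Finite (DoubleCoset.Quotient (H : Set G) H) := Quotient.finite _
  have := Fintype.ofFinite (DoubleCoset.Quotient (H : Set G) H)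
  rw [((FDRep.forget₂HomLinearEquiv _ _).symm ≪≫ₗ Rep.homLinearEquiv _ _ ≪≫ₗ
      intertwiningMapEquiv H (indRep H χ) (θ := ψ.comp H.subtype) hχ ≪≫ₗ
      eigenspaceEquiv H χ hχ).finrank_eq, Module.finrank_fintype_fun_eq_card,
    Fintype.card_eq_nat_card]

end indRep

section Bruhat

variable {K : Type} [Field K]

namespace BorelGL2

/-- The Weyl element `[[0, 1], [1, 0]]`. -/
def weyl : GL (Fin 2) K :=
  ⟨!![0, 1; 1, 0], !![0, 1; 1, 0], by simp [Matrix.one_fin_two], by simp [Matrix.one_fin_two]⟩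

lemma weyl_notMem : weyl ∉ BorelGL2 K := by
  simp [BorelGL2, weyl]

lemma mk_eq_mk_weyl {g : GL (Fin 2) K} (hg : g ∉ BorelGL2 K) :
    DoubleCoset.mk (BorelGL2 K) (BorelGL2 K) g =
      DoubleCoset.mk (BorelGL2 K) (BorelGL2 K) weyl := by
  have hg : (g : Matrix (Fin 2) (Fin 2) K) 1 0 ≠ 0 := hg
  -- `n` clears the `(0, 0)` entry of `g` by a row operation, and `weyl` moves it to `(1, 0)`
  set n := Matrix.GeneralLinearGroup.upperRightHom
    (-((g : Matrix (Fin 2) (Fin 2) K) 0 0 / (g : Matrix (Fin 2) (Fin 2) K) 1 0))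
  have hn : n ∈ BorelGL2 K := by simp [BorelGL2, n]
  have hb : weyl * n * g ∈ BorelGL2 K := by
    simp [BorelGL2, n, weyl, Matrix.mul_apply, Fin.sum_univ_two]
    field_simp
    ring
  have hw : (weyl : GL (Fin 2) K)⁻¹ = weyl := rfl
  rw [show g = n⁻¹ * weyl⁻¹ * (weyl * n * g) by group, DoubleCoset.mk_mul_mul (inv_mem hn) hb, hw]

theorem card_doubleCoset :
    Nat.card (DoubleCoset.Quotient (BorelGL2 K : Set (GL (Fin 2) K)) (BorelGL2 K)) = 2 := by
  refine Nat.card_eq_two_iff.mpr ⟨DoubleCoset.mk _ _ 1, DoubleCoset.mk _ _ weyl, ?_, ?_⟩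
  · rw [ne_comm, Ne, DoubleCoset.mk_eq_mk_one_iff]
    exact weyl_notMem
  · refine Set.eq_univ_of_forall (Quotient.ind fun g => ?_)
    by_cases hg : g ∈ BorelGL2 K
    · exact Or.inl (DoubleCoset.mk_eq_mk_one_iff.mpr hg)
    · exact Or.inr (mk_eq_mk_weyl hg)

end BorelGL2

end Bruhat

section extChar

variable {F} (χ : Fˣ →* ℂˣ)

lemma extChar_val (u : Fˣ) : extChar F χ u = χ u := by
  simp [extChar]

lemma extChar_mul (x y : F) : extChar F χ (x * y) = extChar F χ x * extChar F χ y := by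
  by_cases hx : x = 0
  · simp [extChar, hx]
  by_cases hy : y = 0
  · simp [extChar, hy]
  lift x to Fˣ using isUnit_iff_ne_zero.mpr hx
  lift y to Fˣ using isUnit_iff_ne_zero.mpr hy
  rw [← Units.val_mul, extChar_val, extChar_val, extChar_val, map_mul, Units.val_mul]

lemma extChar_mul_extChar_of_mem_borel {b : GL (Fin 2) F} (hb : b ∈ BorelGL2 F) :
    extChar F χ ((b : Matrix (Fin 2) (Fin 2) F) 0 0) *
        extChar F χ ((b : Matrix (Fin 2) (Fin 2) F) 1 1) =
      χ (Matrix.GeneralLinearGroup.det b) := by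
  have hb : (b : Matrix (Fin 2) (Fin 2) F) 1 0 = 0 := hb
  rw [← extChar_mul, ← extChar_val, Matrix.GeneralLinearGroup.val_det_apply,
    Matrix.det_fin_two, hb, mul_zero, sub_zero]

end extChar

/-- For a character `χ` of `F^×`, the endomorphism algebra of
`Ind_B^{GL_2(F)}(χ_{1,1})`, where `χ_{1,1}([[u,w],[0,v]]) = χ(u)χ(v)`, has dimension 2 over
`ℂ`; equivalently this induced representation is a direct sum of exactly two inequivalent
irreducibles. -/
theorem endalgebra_of_induced_equal_characters (F : Type) [Field F] [Fintype F] [DecidableEq F]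
    (χ : Fˣ →* ℂˣ) :
    Module.finrank ℂ
      (FDRep.of (indRep (BorelGL2 F)
          (fun g => extChar F χ ((g : Matrix (Fin 2) (Fin 2) F) 0 0) *
            extChar F χ ((g : Matrix (Fin 2) (Fin 2) F) 1 1))) ⟶
        FDRep.of (indRep (BorelGL2 F)
          (fun g => extChar F χ ((g : Matrix (Fin 2) (Fin 2) F) 0 0) *
            extChar F χ ((g : Matrix (Fin 2) (Fin 2) F) 1 1)))) = 2 := by
  rw [indRep.finrank_end_eq_card_doubleCoset (ψ := χ.comp Matrix.GeneralLinearGroup.det)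
    fun b => extChar_mul_extChar_of_mem_borel χ b.2, BorelGL2.card_doubleCoset]
end

section
/- Let M = (α/n) J + (1−α) B, where J is the n×n all-ones matrix, B is a row-stochastic n×n matrix, and 0 < α < 1. If the eigenvalues of B are λ_1 = 1, λ_2, …, λ_n, then the eigenvalues of M are 1, (1−α)λ_2, …, (1−α)λ_n. -/
/-!
`M = (1 - α) B + u vᵀ` with `u` the all-ones vector and `v = (α/n) u`. Since `B` is row-stochastic,
`u` is an eigenvector of `(1 - α) B` for the eigenvalue `1 - α`, and by Brauer's theorem a rank-one
perturbation `u vᵀ` along an eigenvector moves only that eigenvalue, from `1 - α` to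
`1 - α + v ⬝ u = 1`, leaving the others `(1 - α) λ_i` in place.
-/

open Polynomial

namespace Matrix

variable {ι : Type*} [Fintype ι] [DecidableEq ι]

theorem X_mul_charpoly_vecMulVec {R : Type*} [CommRing R] (u v : ι → R) :
    X * (vecMulVec u v).charpoly = X ^ Fintype.card ι * (X - C (v ⬝ᵥ u)) := by
  have h := charpoly_mul_comm' (replicateCol Unit u) (replicateRow Unit v)
  rw [Fintype.card_unit, pow_one, ← vecMulVec_eq] at h
  rw [h, charpoly, det_unique, charmatrix_apply_eq, replicateRow_mul_replicateCol_apply]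

/-- Brauer's theorem on rank-one perturbations. -/
theorem charpoly_add_vecMulVec_mul_X_sub_C {R : Type*} [CommRing R] {A : Matrix ι ι R}
    {u : ι → R} {μ : R} (hu : A *ᵥ u = μ • u) (v : ι → R) :
    (A + vecMulVec u v).charpoly * (X - C μ) = A.charpoly * (X - C (μ + v ⬝ᵥ u)) := by
  set c : R[X] := X - C μ
  set S := A.charmatrix
  set N : Matrix ι ι R[X] := vecMulVec (C ∘ u) (C ∘ v)
  have hS : S *ᵥ (C ∘ u) = c • (C ∘ u) := by
    ext i
    have hAu : (A.map C *ᵥ (C ∘ u)) i = C μ * C (u i) := by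
      rw [← RingHom.map_mulVec, hu, Pi.smul_apply, smul_eq_mul, map_mul]
    simp [S, c, charmatrix, sub_mulVec, hAu, sub_mul]
  have hsplit : (A + vecMulVec u v).charmatrix = S - N := by
    ext i j
    simp [S, N, charmatrix, vecMulVec_apply, sub_add_eq_sub_sub]
  -- `S u = c u` lets `c • (S - N)` factor through `S` without inverting `S`.
  have hfactor : c • (S - N) = S * (scalar ι c - N) := by
    rw [Matrix.mul_sub, mul_vecMulVec, hS, smul_vecMulVec, smul_sub, smul_eq_mul_diagonal,
      scalar_apply]
  have hrank : c * (scalar ι c - N).det = c ^ Fintype.card ι * (c - C (v ⬝ᵥ u)) := by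
    have := congrArg (eval c) (X_mul_charpoly_vecMulVec (C ∘ u) (C ∘ v))
    simpa [eval_charpoly, dotProduct, eval_finsetSum] using this
  have hdet := congrArg det hfactor
  rw [det_smul, det_mul] at hdet
  apply ((monic_X_sub_C μ).isRegular.pow (Fintype.card ι)).left
  simp only [charpoly, hsplit]
  calc c ^ Fintype.card ι * ((S - N).det * c) = S.det * (c * (scalar ι c - N).det) := by
        rw [← mul_assoc, hdet]; ring
    _ = c ^ Fintype.card ι * (S.det * (X - C (μ + v ⬝ᵥ u))) := by
        rw [hrank, map_add]; ring

theorem charpoly_smul_of_charpoly_eq_prod {K : Type*} [Field K] {A : Matrix ι ι K} {μ : ι → K}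
    (hA : A.charpoly = ∏ i, (X - C (μ i))) (c : K) :
    (c • A).charpoly = ∏ i, (X - C (c * μ i)) := by
  rcases eq_or_ne c 0 with rfl | hc
  · simp [charpoly_zero]
  set φ : K[X] →ₐ[K] K[X] := aeval (C c⁻¹ * X)
  have hX : C c * φ X = X := by
    rw [aeval_X, ← mul_assoc, ← C_mul, mul_inv_cancel₀ hc, C_1, one_mul]
  have hC (a : K) : φ (C a) = C a := by rw [aeval_C, algebraMap_eq]
  have hcharmatrix : (c • A).charmatrix = C c • φ.mapMatrix A.charmatrix := by
    refine Matrix.ext fun i j => ?_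
    by_cases hij : i = j
    · subst hij
      simp only [charmatrix_apply_eq, smul_apply, AlgHom.mapMatrix_apply, map_apply, map_sub,
        hC, smul_eq_mul, mul_sub, hX, C_mul]
    · simp only [charmatrix_apply_ne _ _ _ hij, smul_apply, AlgHom.mapMatrix_apply, map_apply,
        map_neg, hC, smul_eq_mul, mul_neg, C_mul]
  calc (c • A).charpoly = C c ^ Fintype.card ι * φ A.charpoly := by
        rw [charpoly, hcharmatrix, det_smul, ← AlgHom.map_det, charpoly]
    _ = ∏ i, C c * φ (X - C (μ i)) := by
        rw [hA, map_prod, Finset.prod_mul_distrib, Finset.prod_const, Finset.card_univ]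
    _ = ∏ i, (X - C (c * μ i)) := by
        refine Finset.prod_congr rfl fun i _ => ?_
        rw [map_sub, hC, mul_sub, hX, C_mul]

end Matrix

theorem Finset.prod_comp_ite_eq_mul {ι κ M : Type*} [CommMonoid M] [DecidableEq ι]
    {s : Finset ι} {j : ι} (hj : j ∈ s) (g : κ → M) (f : ι → κ) (a : κ) :
    (∏ i ∈ s, g (if i = j then a else f i)) * g (f j) = (∏ i ∈ s, g (f i)) * g a := by
  rw [← mul_prod_erase s _ hj, ← mul_prod_erase s _ hj, if_pos rfl,
    prod_congr rfl fun i hi => by rw [if_neg (ne_of_mem_erase hi)]]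
  ac_rfl

theorem eigenvalues_of_shifted_stochastic_matrix_general (n : ℕ) (hn : 0 < n)
    (α : ℝ)
    (B : Matrix (Fin n) (Fin n) ℝ) (hB : ∀ i, ∑ j, B i j = 1)
    (lam : Fin n → ℂ) (hl1 : lam ⟨0, hn⟩ = 1)
    (hch : (B.map (Complex.ofReal : ℝ → ℂ)).charpoly = ∏ i, (X - C (lam i))) :
    (((α / (n : ℝ)) • (Matrix.of fun _ _ => (1 : ℝ)) + (1 - α) • B).map
        (Complex.ofReal : ℝ → ℂ)).charpoly
      = ∏ i : Fin n, (X - C (if i = ⟨0, hn⟩ then 1 else (1 - (α : ℂ)) * lam i)) := by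
  set c : ℂ := 1 - α
  set v : Fin n → ℂ := fun _ => α / n
  have hM : (((α / (n : ℝ)) • (Matrix.of fun _ _ => (1 : ℝ)) + (1 - α) • B).map
      (Complex.ofReal : ℝ → ℂ)) = c • B.map Complex.ofReal + Matrix.vecMulVec 1 v := by
    ext i j
    simp only [Matrix.smul_of, Matrix.map_apply, Matrix.add_apply, Matrix.of_apply, Pi.smul_apply,
      smul_eq_mul, mul_one, Matrix.smul_apply, Complex.ofReal_add, Complex.ofReal_div,
      Complex.ofReal_natCast, Complex.ofReal_mul, Complex.ofReal_sub, Complex.ofReal_one,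
      Matrix.one_vecMulVec, Matrix.replicateRow_apply, c, v]
    ring
  have hstoch : (c • B.map Complex.ofReal).mulVec 1 = c • 1 := by
    rw [Matrix.smul_mulVec]
    congr 1
    ext i
    simp only [Matrix.mulVec, dotProduct, Matrix.map_apply, Pi.one_apply, mul_one]
    rw [← Complex.ofReal_sum, hB i, Complex.ofReal_one]
  have hdot : v ⬝ᵥ 1 = α := by
    simp only [v, dotProduct, Pi.one_apply, mul_one, Finset.sum_const, Finset.card_univ,
      Fintype.card_fin, nsmul_eq_mul]
    exact mul_div_cancel₀ _ (Nat.cast_ne_zero.mpr hn.ne')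
  have hbrauer := Matrix.charpoly_add_vecMulVec_mul_X_sub_C hstoch v
  rw [← hM, hdot, Matrix.charpoly_smul_of_charpoly_eq_prod hch, sub_add_cancel] at hbrauer
  have hsplit := Finset.prod_comp_ite_eq_mul (Finset.mem_univ ⟨0, hn⟩)
    (fun z => X - C z) (fun i => c * lam i) 1
  simp only [hl1, mul_one] at hsplit
  exact (monic_X_sub_C c).isRegular.right (hbrauer.trans hsplit.symm)

/-- If `M = (α/n) J + (1−α) B` with `J` the all-ones matrix and `B` row-stochastic with
(complex) eigenvalues `λ_1 = 1, λ_2, …, λ_n` (counted with algebraic multiplicity, i.e.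
`charpoly B = ∏ (X − λ_i)`), then the eigenvalues of `M` are
`1, (1−α)λ_2, …, (1−α)λ_n`. -/
theorem eigenvalues_of_shifted_stochastic_matrix (n : ℕ) (hn : 0 < n)
    (α : ℝ) (hα0 : 0 < α) (hα1 : α < 1)
    (B : Matrix (Fin n) (Fin n) ℝ) (hB : ∀ i, ∑ j, B i j = 1)
    (lam : Fin n → ℂ) (hl1 : lam ⟨0, hn⟩ = 1)
    (hch : (B.map (Complex.ofReal : ℝ → ℂ)).charpoly = ∏ i, (X - C (lam i))) :
    (((α / (n : ℝ)) • (Matrix.of fun _ _ => (1 : ℝ)) + (1 - α) • B).map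
        (Complex.ofReal : ℝ → ℂ)).charpoly
      = ∏ i : Fin n, (X - C (if i = ⟨0, hn⟩ then 1 else (1 - (α : ℂ)) * lam i)) :=
  eigenvalues_of_shifted_stochastic_matrix_general n hn α B hB lam hl1 hch
end

section
/- In the ring M_2(F_q) with q > 2, the set {identity matrix, E_{12} (matrix with single 1 in position (1,2)), zero matrix} ∪ {[[1,z],[0,0]] : z ∈ F_q} is a complete set of representatives of the distinct principal left ideals of M_2(F_q); in particular M_2(F_q) has exactly q + 3 distinct principal left ideals. -/
/-!
Left multiplication by an invertible matrix does not change the left ideal `M₂(F) * A`, and row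
reduction brings every matrix to one of the reduced row echelon forms `1`, `E₁₂`, `0`,
`!![1, z; 0, 0]`. These generate distinct left ideals: `X * A` vanishes on the kernel of `A`, so
equal left ideals force equal kernels, and the kernels of the echelon forms are `0`, `F × 0`, `F²`
and the lines spanned by `(-z, 1)`.
-/

open Matrix

theorem Ideal.coe_span_singleton_eq_range_mul {R : Type*} [Semiring R] (A : R) :
    (Ideal.span {A} : Set R) = Set.range (fun X : R => X * A) := by
  ext; simp [Ideal.mem_span_singleton']

theorem Matrix.mulVec_eq_zero_of_mem_span_singleton {n R : Type*} [Fintype n] [DecidableEq n]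
    [CommRing R] {A B : Matrix n n R} (hB : B ∈ Ideal.span {A}) {v : n → R}
    (hv : A *ᵥ v = 0) : B *ᵥ v = 0 := by
  obtain ⟨X, rfl⟩ := Ideal.mem_span_singleton'.mp hB
  rw [← mulVec_mulVec, hv, mulVec_zero]

/-- The `2 × 2` matrices in reduced row echelon form. -/
def rowEchelonForms (F : Type*) [Field F] : Set (Matrix (Fin 2) (Fin 2) F) :=
  {1, Matrix.single 0 1 (1 : F), 0} ∪ Set.range fun z : F => Matrix.of ![![(1 : F), z], ![0, 0]]

section FinTwo

variable {F : Type*} [Field F]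

theorem exists_eq_mul_and_eq_mul_of_mul_eq_mul {a b c d : F} (hac : a ≠ 0 ∨ c ≠ 0)
    (h : a * d = b * c) : ∃ z, b = a * z ∧ d = c * z := by
  rcases hac with ha | hc
  · exact ⟨b / a, by field_simp, by field_simp; linear_combination h⟩
  · exact ⟨d / c, by field_simp; linear_combination -h, by field_simp⟩

theorem exists_isUnit_col_zero_eq {a c : F} (hac : a ≠ 0 ∨ c ≠ 0) :
    ∃ U : Matrix (Fin 2) (Fin 2) F, IsUnit U ∧ U 0 0 = a ∧ U 1 0 = c := by
  simp only [isUnit_iff_isUnit_det, isUnit_iff_ne_zero, det_fin_two]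
  by_cases ha : a = 0
  · exact ⟨!![0, 1; c, 0], by simpa [ha] using hac, by simp [ha], rfl⟩
  · exact ⟨!![a, 0; c, 1], by simpa using ha, rfl, rfl⟩

theorem exists_isUnit_mul_mem_rowEchelonForms (B : Matrix (Fin 2) (Fin 2) F) :
    ∃ U, IsUnit U ∧ ∃ A ∈ rowEchelonForms F, B = U * A := by
  by_cases hB : IsUnit B
  · exact ⟨B, hB, 1, by simp [rowEchelonForms], (mul_one B).symm⟩
  have hdet : B 0 0 * B 1 1 = B 0 1 * B 1 0 := by
    rwa [isUnit_iff_isUnit_det, isUnit_iff_ne_zero, det_fin_two, not_not, sub_eq_zero] at hB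
  by_cases hcol₀ : B 0 0 ≠ 0 ∨ B 1 0 ≠ 0
  · obtain ⟨U, hU, hU₀, hU₁⟩ := exists_isUnit_col_zero_eq hcol₀
    obtain ⟨z, hz₀, hz₁⟩ := exists_eq_mul_and_eq_mul_of_mul_eq_mul hcol₀ hdet
    refine ⟨U, hU, of ![![1, z], ![0, 0]], Or.inr ⟨z, rfl⟩, ?_⟩
    ext i j
    fin_cases i <;> fin_cases j <;> simp [mul_apply, hU₀, hU₁, hz₀, hz₁]
  by_cases hcol₁ : B 0 1 ≠ 0 ∨ B 1 1 ≠ 0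
  · obtain ⟨U, hU, hU₀, hU₁⟩ := exists_isUnit_col_zero_eq hcol₁
    refine ⟨U, hU, single 0 1 1, by simp [rowEchelonForms], ?_⟩
    push Not at hcol₀
    ext i j
    fin_cases i <;> fin_cases j <;> simp [mul_apply, hU₀, hU₁, hcol₀]
  · refine ⟨1, isUnit_one, 0, by simp [rowEchelonForms], ?_⟩
    push Not at hcol₀ hcol₁
    ext i j
    fin_cases i <;> fin_cases j <;> simp [hcol₀, hcol₁]

theorem eq_of_mem_rowEchelonForms_of_mulVec_eq_zero_iff {A A' : Matrix (Fin 2) (Fin 2) F}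
    (hA : A ∈ rowEchelonForms F) (hA' : A' ∈ rowEchelonForms F)
    (h : ∀ v, A *ᵥ v = 0 ↔ A' *ᵥ v = 0) : A = A' := by
  have h₀ := h ![1, 0]
  have h₁ := h ![0, 1]
  -- `![-z, 1]` spans the kernel of `!![1, z; 0, 0]`.
  have hA₁ := h ![-A 0 1, 1]
  have hA'₁ := h ![-A' 0 1, 1]
  clear h
  rcases hA with (rfl | rfl | rfl) | ⟨z, rfl⟩ <;>
    rcases hA' with (rfl | rfl | rfl) | ⟨z', rfl⟩
  all_goals simp_all [funext_iff, Fin.forall_fin_two, neg_add_eq_zero]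

theorem exists_mem_rowEchelonForms_range_mul_eq (B : Matrix (Fin 2) (Fin 2) F) :
    ∃ A ∈ rowEchelonForms F, Set.range (· * B) = Set.range (· * A) := by
  obtain ⟨U, hU, A, hA, rfl⟩ := exists_isUnit_mul_mem_rowEchelonForms B
  refine ⟨A, hA, ?_⟩
  simp only [← Ideal.coe_span_singleton_eq_range_mul, Ideal.span_singleton_mul_left_unit hU]

theorem injOn_range_mul_rowEchelonForms :
    Set.InjOn (fun A => Set.range (· * A)) (rowEchelonForms F) := by
  intro A hA A' hA' h
  simp only [← Ideal.coe_span_singleton_eq_range_mul, SetLike.coe_set_eq] at h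
  refine eq_of_mem_rowEchelonForms_of_mulVec_eq_zero_iff hA hA' fun v =>
    ⟨fun hv => ?_, fun hv => ?_⟩
  · exact mulVec_eq_zero_of_mem_span_singleton (h ▸ Ideal.mem_span_singleton_self A') hv
  · exact mulVec_eq_zero_of_mem_span_singleton (h ▸ Ideal.mem_span_singleton_self A) hv

theorem ncard_rowEchelonForms [Fintype F] :
    (rowEchelonForms F).ncard = Fintype.card F + 3 := by
  have hinj : Function.Injective fun z : F => of ![![(1 : F), z], ![0, 0]] :=
    fun z z' h => by simpa using congrFun (congrFun h 0) 1
  have hdisj : Disjoint {1, single 0 1 (1 : F), 0}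
      (Set.range fun z : F => of ![![(1 : F), z], ![0, 0]]) := by
    rw [Set.disjoint_right]
    rintro _ ⟨z, rfl⟩
    simp [← Matrix.ext_iff, Fin.forall_fin_two]
  have hthree : ({1, single 0 1 (1 : F), 0} : Set (Matrix (Fin 2) (Fin 2) F)).ncard = 3 := by
    rw [Set.ncard_eq_three]
    refine ⟨_, _, _, ?_, ?_, ?_, rfl⟩ <;> simp [← Matrix.ext_iff, Fin.forall_fin_two]
  rw [rowEchelonForms, Set.ncard_union_eq hdisj, hthree, Set.ncard_range_of_injective hinj,
    Nat.card_eq_fintype_card, add_comm]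

end FinTwo

theorem m2_principal_left_ideal_representatives_general (F : Type) [Field F] [Fintype F] :
    (∀ B : Matrix (Fin 2) (Fin 2) F,
      ∃ A ∈ ({1, Matrix.single 0 1 (1 : F), 0} ∪
          Set.range fun z : F => Matrix.of ![![(1 : F), z], ![0, 0]]),
        Set.range (fun X : Matrix (Fin 2) (Fin 2) F => X * B)
          = Set.range (fun X : Matrix (Fin 2) (Fin 2) F => X * A)) ∧
    Set.InjOn (fun A => Set.range (fun X : Matrix (Fin 2) (Fin 2) F => X * A))
      ({1, Matrix.single 0 1 (1 : F), 0} ∪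
        Set.range fun z : F => Matrix.of ![![(1 : F), z], ![0, 0]]) ∧
    Nat.card {S : Set (Matrix (Fin 2) (Fin 2) F) //
        ∃ A : Matrix (Fin 2) (Fin 2) F,
          S = Set.range (fun X : Matrix (Fin 2) (Fin 2) F => X * A)}
      = Fintype.card F + 3 := by
  have hbij : Set.BijOn (fun A => Set.range (· * A)) (rowEchelonForms F)
      {S | ∃ A, S = Set.range (· * A)} := by
    refine ⟨fun A _ => ⟨A, rfl⟩, injOn_range_mul_rowEchelonForms, ?_⟩
    rintro _ ⟨B, rfl⟩
    obtain ⟨A, hA, hBA⟩ := exists_mem_rowEchelonForms_range_mul_eq B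
    exact ⟨A, hA, hBA.symm⟩
  refine ⟨exists_mem_rowEchelonForms_range_mul_eq, injOn_range_mul_rowEchelonForms, ?_⟩
  rw [← ncard_rowEchelonForms, ← Nat.card_coe_set_eq]
  exact (Nat.card_congr (hbij.equiv _)).symm

/-- In `M_2(F_q)` with `q > 2`, the set
`{1, E_{12}, 0} ∪ {[[1,z],[0,0]] : z ∈ F_q}` is a complete set of representatives of the
distinct principal left ideals; in particular there are exactly `q + 3` distinct principal
left ideals. -/
theorem m2_principal_left_ideal_representatives (F : Type) [Field F] [Fintype F]
    [DecidableEq F] (hq : 2 < Fintype.card F) :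
    (∀ B : Matrix (Fin 2) (Fin 2) F,
      ∃ A ∈ ({1, Matrix.single 0 1 (1 : F), 0} ∪
          Set.range fun z : F => Matrix.of ![![(1 : F), z], ![0, 0]]),
        Set.range (fun X : Matrix (Fin 2) (Fin 2) F => X * B)
          = Set.range (fun X : Matrix (Fin 2) (Fin 2) F => X * A)) ∧
    Set.InjOn (fun A => Set.range (fun X : Matrix (Fin 2) (Fin 2) F => X * A))
      ({1, Matrix.single 0 1 (1 : F), 0} ∪
        Set.range fun z : F => Matrix.of ![![(1 : F), z], ![0, 0]]) ∧
    Nat.card {S : Set (Matrix (Fin 2) (Fin 2) F) //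
        ∃ A : Matrix (Fin 2) (Fin 2) F,
          S = Set.range (fun X : Matrix (Fin 2) (Fin 2) F => X * A)}
      = Fintype.card F + 3 :=
  m2_principal_left_ideal_representatives_general F
end
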